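/- Let g be in the closed unit ball of ℋ^∞(B_{ℓ₂},ℓ₂) and f ∈ 𝒜_u(B_{ℓ₂}). Then for every h ∈ 𝒞ℓ(f,g) there exists Φ ∈ ℳ_{u,∞}(B_{ℓ₂},B_{ℓ₂}) with ξ(Φ) = g and Φ(f) = h; that is, 𝒞ℓ(f,g) ⊆ {Φ(f) : Φ ∈ 𝓕(g)}. -/

import Mathlib

open Metric Set Filter

noncomputable section

/-- `ℓ2` is the complex Hilbert space of square-summable sequences indexed by `ℕ`. -/
abbrev ℓ2 : Type := lp (fun _ : ℕ => ℂ) 2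

/-- The open unit ball of `ℓ2`. -/
def oB : Set ℓ2 := Metric.ball 0 1

/-- The closed unit ball of `ℓ2`. -/
def cB : Set ℓ2 := Metric.closedBall 0 1

/-- The unit sphere of `ℓ2`. -/
def sph : Set ℓ2 := Metric.sphere 0 1

/-- The coordinate functional `x ↦ ⟨x, eₙ⟩ = xₙ` (inner product linear in the first variable). -/
def coord (n : ℕ) : ℓ2 → ℂ := fun x => x n

/-- Supremum norm on the open unit ball, for scalar-valued functions. -/
def supNorm (f : ℓ2 → ℂ) : ℝ := ⨆ x : oB, ‖f (x : ℓ2)‖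

/-- Supremum norm on the open unit ball, for `ℓ2`-valued functions. -/
def supNormV (g : ℓ2 → ℓ2) : ℝ := ⨆ x : oB, ‖g (x : ℓ2)‖

/-- Membership in `𝒜ᵤ(B)`: holomorphic on the open unit ball and uniformly continuous there. -/
def MemAu (f : ℓ2 → ℂ) : Prop :=
  DifferentiableOn ℂ f oB ∧ UniformContinuousOn f oB

/-- Membership in `ℋ^∞(B)`: holomorphic and bounded on the open unit ball. -/
def MemHinf (f : ℓ2 → ℂ) : Prop :=
  DifferentiableOn ℂ f oB ∧ ∃ C, ∀ x ∈ oB, ‖f x‖ ≤ C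

/-- Membership in `ℋ^∞(B,ℓ2)`: holomorphic and bounded on the open unit ball, `ℓ2`-valued. -/
def MemHinfV (g : ℓ2 → ℓ2) : Prop :=
  DifferentiableOn ℂ g oB ∧ ∃ C, ∀ x ∈ oB, ‖g x‖ ≤ C

/-- `fext` is (a representative of) the unique continuous extension `f̃` of `f` to the
closed unit ball. -/
def IsExt (f fext : ℓ2 → ℂ) : Prop :=
  ContinuousOn fext cB ∧ Set.EqOn fext f oB

/-- An element of the scalar-valued spectrum `ℳᵤ(B)`: a nonzero continuous `ℂ`-algebra
homomorphism `𝒜ᵤ(B) → ℂ`, encoded as a map on representatives. -/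
structure MuHom where
  toFun : (ℓ2 → ℂ) → ℂ
  map_add : ∀ f g, MemAu f → MemAu g → toFun (f + g) = toFun f + toFun g
  map_mul : ∀ f g, MemAu f → MemAu g → toFun (f * g) = toFun f * toFun g
  map_smul : ∀ (c : ℂ) (f), MemAu f → toFun (c • f) = c * toFun f
  respects : ∀ f g, MemAu f → MemAu g → Set.EqOn f g oB → toFun f = toFun g
  nonzero : ∃ f, MemAu f ∧ toFun f ≠ 0
  cont : ∃ C, ∀ f, MemAu f → ‖toFun f‖ ≤ C * supNorm f

/-- An element of the vector-valued spectrum `ℳ_{u,∞}(B,B)`: a nonzero continuous `ℂ`-algebra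
homomorphism `𝒜ᵤ(B) → ℋ^∞(B)`, encoded as a map on representatives. -/
structure MuInfHom where
  toFun : (ℓ2 → ℂ) → (ℓ2 → ℂ)
  maps_mem : ∀ f, MemAu f → MemHinf (toFun f)
  map_add : ∀ f g, MemAu f → MemAu g → ∀ x ∈ oB, toFun (f + g) x = toFun f x + toFun g x
  map_mul : ∀ f g, MemAu f → MemAu g → ∀ x ∈ oB, toFun (f * g) x = toFun f x * toFun g x
  map_smul : ∀ (c : ℂ) (f), MemAu f → ∀ x ∈ oB, toFun (c • f) x = c * toFun f x
  respects : ∀ f g, MemAu f → MemAu g → Set.EqOn f g oB → Set.EqOn (toFun f) (toFun g) oB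
  nonzero : ∃ f, MemAu f ∧ ∃ x ∈ oB, toFun f x ≠ 0
  cont : ∃ C, ∀ f, MemAu f → ∀ x ∈ oB, ‖toFun f x‖ ≤ C * supNorm f

/-- An element of the scalar-valued spectrum `ℳ_∞(B)`: a nonzero continuous `ℂ`-algebra
homomorphism `ℋ^∞(B) → ℂ`, encoded as a map on representatives. -/
structure MInfHom where
  toFun : (ℓ2 → ℂ) → ℂ
  map_add : ∀ f g, MemHinf f → MemHinf g → toFun (f + g) = toFun f + toFun g
  map_mul : ∀ f g, MemHinf f → MemHinf g → toFun (f * g) = toFun f * toFun g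
  map_smul : ∀ (c : ℂ) (f), MemHinf f → toFun (c • f) = c * toFun f
  respects : ∀ f g, MemHinf f → MemHinf g → Set.EqOn f g oB → toFun f = toFun g
  nonzero : ∃ f, MemHinf f ∧ toFun f ≠ 0
  cont : ∃ C, ∀ f, MemHinf f → ‖toFun f‖ ≤ C * supNorm f

/-- `ξ(Φ) = g`: the projection of `Φ` is the function `g`, i.e. `Φ(⟨·,eₙ⟩)(x) = g(x)ₙ`. -/
def xiEq (Φ : MuInfHom) (g : ℓ2 → ℓ2) : Prop :=
  ∀ x ∈ oB, ∀ n : ℕ, Φ.toFun (coord n) x = g x n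

/-- `Φ = C_g`: `Φ` is the composition homomorphism `f ↦ f̃ ∘ g`. -/
def IsCompHom (Φ : MuInfHom) (g : ℓ2 → ℓ2) : Prop :=
  ∀ f fext, MemAu f → IsExt f fext → ∀ x ∈ oB, Φ.toFun f x = fext (g x)

/-- The open unit ball of `ℋ^∞(B,ℓ2)`. -/
def ballHV : Set (ℓ2 → ℓ2) := {h | MemHinfV h ∧ supNormV h < 1}

/-- The open unit ball of `ℋ^∞(B)`. -/
def ballH : Set (ℓ2 → ℂ) := {h | MemHinf h ∧ supNorm h < 1}

/-- `F` is holomorphic on the open unit ball of `ℋ^∞(B,ℓ2)`: it is locally bounded there and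
`ℂ`-differentiable along every complex line (which, for maps on a ball of a Banach space, is
equivalent to Fréchet holomorphy). -/
def HolomorphicOnBallHV (F : (ℓ2 → ℓ2) → ℂ) : Prop :=
  (∀ h ∈ ballHV, ∃ ε > 0, ∃ C, ∀ k ∈ ballHV, supNormV (k - h) < ε → ‖F k‖ ≤ C) ∧
  (∀ h ∈ ballHV, ∀ k, MemHinfV k →
    DifferentiableOn ℂ (fun z : ℂ => F (h + z • k)) {z : ℂ | (h + z • k) ∈ ballHV})

/-- `F` is holomorphic on the open unit ball of `ℋ^∞(B)`: it is locally bounded there and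
`ℂ`-differentiable along every complex line. -/
def HolomorphicOnBallH (F : (ℓ2 → ℂ) → ℂ) : Prop :=
  (∀ h ∈ ballH, ∃ ε > 0, ∃ C, ∀ k ∈ ballH, supNorm (k - h) < ε → ‖F k‖ ≤ C) ∧
  (∀ h ∈ ballH, ∀ k, MemHinf k →
    DifferentiableOn ℂ (fun z : ℂ => F (h + z • k)) {z : ℂ | (h + z • k) ∈ ballH})

/-- `h ∈ 𝒞ℓ(f,g)` (with `fext = f̃` the continuous extension of `f` to the closed ball):
there is a net `(g_α)` in the open unit ball of `ℋ^∞(B,ℓ2)` converging weak-star to `g`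
(pointwise weak convergence of values) with `f̃(g_α(y)) → h(y)` for every `y ∈ B`. -/
def InCluster (fext : ℓ2 → ℂ) (g : ℓ2 → ℓ2) (h : ℓ2 → ℂ) : Prop :=
  ∃ (ι : Type) (l : Filter ι), l.NeBot ∧ ∃ gA : ι → ℓ2 → ℓ2,
    (∀ i, gA i ∈ ballHV) ∧
    (∀ y ∈ oB, ∀ u : ℓ2,
      Filter.Tendsto (fun i => (inner ℂ (gA i y) u : ℂ)) l (nhds (inner ℂ (g y) u))) ∧
    (∀ y ∈ oB, Filter.Tendsto (fun i => fext (gA i y)) l (nhds (h y)))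

lemma mem_oB_iff {x : ℓ2} : x ∈ oB ↔ ‖x‖ < 1 := by
  simp [oB, mem_ball_zero_iff]

lemma zero_mem_oB : (0 : ℓ2) ∈ oB := by simp [mem_oB_iff]

lemma oB_open : IsOpen oB := isOpen_ball

/-- uniformly continuous on the ball implies bounded there -/
lemma MemAu.bounded {u : ℓ2 → ℂ} (hu : MemAu u) : ∃ C, 0 ≤ C ∧ ∀ x ∈ oB, ‖u x‖ ≤ C := by
  obtain ⟨δ, hδ, hδ'⟩ := (Metric.uniformContinuousOn_iff.1 hu.2) 1 one_pos
  obtain ⟨N, hN⟩ := exists_nat_gt (1 / δ)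
  have hN0 : (0:ℝ) < N := lt_of_le_of_lt (by positivity) hN
  refine ⟨‖u 0‖ + N, by positivity, fun x hx => ?_⟩
  have hx1 : ‖x‖ < 1 := mem_oB_iff.1 hx
  have hmem : ∀ k : ℕ, k ≤ N → ((k / N : ℝ) • x) ∈ oB := by
    intro k hk
    rw [mem_oB_iff, norm_smul]
    calc ‖(k / N : ℝ)‖ * ‖x‖ ≤ 1 * ‖x‖ := by
          apply mul_le_mul_of_nonneg_right _ (norm_nonneg x)
          rw [Real.norm_eq_abs, abs_of_nonneg (by positivity)]
          rw [div_le_one hN0]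
          exact_mod_cast hk
      _ < 1 := by rwa [one_mul]
  have key : ∀ k : ℕ, k ≤ N → dist (u ((k / N : ℝ) • x)) (u 0) ≤ k := by
    intro k
    induction k with
    | zero => intro _; simp
    | succ k ih =>
      intro hk
      have hk' : k ≤ N := le_of_lt (lt_of_lt_of_le (Nat.lt_succ_self k) hk)
      have hstep : dist (u (((k+1 : ℕ) / N : ℝ) • x)) (u ((k / N : ℝ) • x)) < 1 := by
        apply hδ' _ (hmem _ hk) _ (hmem _ hk')
        rw [dist_eq_norm, ← sub_smul, norm_smul]
        have : ((k+1 : ℕ) / N - (k:ℝ) / N) = 1 / N := by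
          push_cast
          field_simp
          ring
        rw [this]
        calc ‖(1 / N : ℝ)‖ * ‖x‖ ≤ (1/N : ℝ) * 1 := by
              apply mul_le_mul (le_of_eq ?_) hx1.le (norm_nonneg x) (by positivity)
              rw [Real.norm_eq_abs, abs_of_nonneg (by positivity)]
          _ < δ := by
              rw [mul_one, div_lt_iff₀ hN0]
              rw [div_lt_iff₀ hδ] at hN
              linarith [hN]
      calc dist (u (((k+1 : ℕ) / N : ℝ) • x)) (u 0)
          ≤ dist (u (((k+1 : ℕ) / N : ℝ) • x)) (u ((k / N : ℝ) • x))
            + dist (u ((k / N : ℝ) • x)) (u 0) := dist_triangle _ _ _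
        _ ≤ 1 + k := add_le_add hstep.le (ih hk')
        _ = ((k+1 : ℕ) : ℝ) := by push_cast; ring
  have hNN : ((N / N : ℝ) • x) = x := by
    rw [div_self (ne_of_gt hN0), one_smul]
  have := key N le_rfl
  rw [hNN, dist_eq_norm] at this
  calc ‖u x‖ = ‖u 0 + (u x - u 0)‖ := by ring_nf
    _ ≤ ‖u 0‖ + ‖u x - u 0‖ := norm_add_le _ _
    _ ≤ ‖u 0‖ + N := by linarith [this]

lemma norm_le_supNorm {u : ℓ2 → ℂ} {C : ℝ} (hC : ∀ x ∈ oB, ‖u x‖ ≤ C)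
    {x : ℓ2} (hx : x ∈ oB) : ‖u x‖ ≤ supNorm u := by
  have hbdd : BddAbove (Set.range fun y : oB => ‖u y‖) := by
    refine ⟨C, ?_⟩
    rintro _ ⟨y, rfl⟩
    exact hC y y.2
  exact le_ciSup hbdd (⟨x, hx⟩ : oB)

lemma ballHV_mapsTo {g' : ℓ2 → ℓ2} (hg' : g' ∈ ballHV) {x : ℓ2} (hx : x ∈ oB) :
    g' x ∈ oB := by
  obtain ⟨⟨hd, C, hC⟩, hlt⟩ := hg'
  have hbdd : BddAbove (Set.range fun y : oB => ‖g' y‖) := by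
    refine ⟨C, ?_⟩
    rintro _ ⟨y, rfl⟩
    exact hC y y.2
  have : ‖g' x‖ ≤ supNormV g' := le_ciSup hbdd (⟨x, hx⟩ : oB)
  exact mem_oB_iff.2 (lt_of_le_of_lt this hlt)

lemma ultra_lim {ι : Type} (U : Ultrafilter ι) (fn : ι → ℂ) (C : ℝ)
    (h : ∀ i, ‖fn i‖ ≤ C) : Tendsto fn ↑U (nhds (limUnder ↑U fn)) := by
  have hle : ↑(U.map fn) ≤ Filter.principal (Metric.closedBall (0:ℂ) C) := by
    rw [Filter.le_principal_iff, Ultrafilter.coe_map, Filter.mem_map]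
    exact Filter.univ_mem' (fun i => by simpa [Set.mem_preimage, mem_closedBall_zero_iff] using h i)
  obtain ⟨c, -, hc⟩ := (isCompact_closedBall (0:ℂ) C).ultrafilter_le_nhds (U.map fn) hle
  have ht : Tendsto fn ↑U (nhds c) := hc
  rwa [ht.limUnder_eq]

section Taylor

open FormalMultilinearSeries

/-- Cauchy estimates / first-order Taylor bound for a bounded holomorphic function on a disc. -/
lemma taylor_bound {φ : ℂ → ℂ} {R C : ℝ} (hR : 0 < R)
    (hd : DifferentiableOn ℂ φ (Metric.closedBall 0 R))
    (hb : ∀ z ∈ Metric.closedBall (0:ℂ) R, ‖φ z‖ ≤ C) :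
    ‖deriv φ 0‖ ≤ C / R ∧
    ∀ z : ℂ, ‖z‖ ≤ R / 2 → ‖φ z - φ 0 - deriv φ 0 * z‖ ≤ 2 * C / R ^ 2 * ‖z‖ ^ 2 := by
  have hC0 : 0 ≤ C := le_trans (norm_nonneg _) (hb 0 (Metric.mem_closedBall_self hR.le))
  set Rn : NNReal := ⟨R, hR.le⟩ with hRn
  have hRn0 : 0 < Rn := by exact_mod_cast hR
  have hps : HasFPowerSeriesOnBall φ (cauchyPowerSeries φ 0 R) 0 Rn :=
    DifferentiableOn.hasFPowerSeriesOnBall (R := Rn) hd hRn0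
  set p := cauchyPowerSeries φ 0 R with hp
  -- coefficient bounds
  have hcont : ContinuousOn (fun θ : ℝ => φ (circleMap 0 R θ)) (Set.uIcc 0 (2 * Real.pi)) :=
    (hd.continuousOn.comp (continuous_circleMap 0 R).continuousOn
      (fun θ _ => circleMap_mem_closedBall (0:ℂ) hR.le θ)).mono (Set.subset_univ _)
  have hInt : IntervalIntegrable (fun θ : ℝ => ‖φ (circleMap 0 R θ)‖)
      MeasureTheory.volume 0 (2 * Real.pi) := hcont.norm.intervalIntegrable
  have hIb : (∫ θ : ℝ in (0)..(2 * Real.pi), ‖φ (circleMap 0 R θ)‖) ≤ 2 * Real.pi * C := by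
    calc (∫ θ : ℝ in (0)..(2 * Real.pi), ‖φ (circleMap 0 R θ)‖)
        ≤ ∫ _ : ℝ in (0)..(2 * Real.pi), C := by
          apply intervalIntegral.integral_mono_on Real.two_pi_pos.le hInt
            intervalIntegrable_const
          intro θ _
          exact hb _ (circleMap_mem_closedBall (0:ℂ) hR.le θ)
      _ = 2 * Real.pi * C := by
          rw [intervalIntegral.integral_const, smul_eq_mul]; ring
  have hcoeff : ∀ n : ℕ, ‖p n‖ ≤ C / R ^ n := by
    intro n
    calc ‖p n‖ ≤ ((2 * Real.pi)⁻¹ * ∫ θ : ℝ in (0)..(2 * Real.pi),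
          ‖φ (circleMap 0 R θ)‖) * |R|⁻¹ ^ n := norm_cauchyPowerSeries_le φ 0 R n
      _ ≤ ((2 * Real.pi)⁻¹ * (2 * Real.pi * C)) * |R|⁻¹ ^ n := by
          apply mul_le_mul_of_nonneg_right _ (by positivity)
          exact mul_le_mul_of_nonneg_left hIb (by positivity)
      _ = C / R ^ n := by
          rw [abs_of_pos hR]
          rw [inv_mul_cancel_left₀ (ne_of_gt Real.two_pi_pos)]
          rw [inv_pow, div_eq_mul_inv]
  have hcoeff' : ∀ n : ℕ, ‖p.coeff n‖ ≤ C / R ^ n := by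
    intro n
    refine le_trans ?_ (hcoeff n)
    calc ‖p n fun _ => (1:ℂ)‖ ≤ ‖p n‖ * ∏ _i : Fin n, ‖(1:ℂ)‖ :=
          ContinuousMultilinearMap.le_opNorm _ _
      _ = ‖p n‖ := by simp
  have hderiv : deriv φ 0 = p.coeff 1 := hps.hasFPowerSeriesAt.deriv
  constructor
  · rw [hderiv]
    simpa using hcoeff' 1
  · intro z hz
    have hzR : ‖z‖ < R := lt_of_le_of_lt hz (by linarith)
    have hmem : z ∈ Metric.eball (0:ℂ) Rn := by
      rw [mem_emetric_ball_zero_iff]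
      exact_mod_cast hzR
    have hsum : HasSum (fun n => p n fun _ => z) (φ z) := by
      simpa using hps.hasSum hmem
    have hsum' : HasSum (fun n => z ^ n * p.coeff n) (φ z) := by
      convert hsum using 1
      funext n
      rw [FormalMultilinearSeries.apply_eq_pow_smul_coeff, smul_eq_mul]
    have h2 : HasSum (fun n => z ^ (n + 2) * p.coeff (n + 2))
        (φ z - ∑ i ∈ Finset.range 2, z ^ i * p.coeff i) :=
      (hasSum_nat_add_iff' 2).2 hsum'
    have hval : φ z - ∑ i ∈ Finset.range 2, z ^ i * p.coeff i
        = φ z - φ 0 - deriv φ 0 * z := by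
      have h0 : p.coeff 0 = φ 0 := hps.coeff_zero 1
      rw [Finset.sum_range_succ, Finset.sum_range_one, h0, hderiv]
      ring
    rw [hval] at h2
    set K := C * ‖z‖ ^ 2 / R ^ 2 with hK
    have hbnd : ∀ n : ℕ, ‖z ^ (n + 2) * p.coeff (n + 2)‖ ≤ K * (1 / 2) ^ n := by
      intro n
      have h1 : ‖z ^ (n + 2) * p.coeff (n + 2)‖ ≤ ‖z‖ ^ (n + 2) * (C / R ^ (n + 2)) := by
        rw [norm_mul, norm_pow]
        exact mul_le_mul_of_nonneg_left (hcoeff' (n + 2)) (by positivity)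
      refine h1.trans ?_
      have hzR' : ‖z‖ / R ≤ 1 / 2 := by
        rw [div_le_div_iff₀ hR (by norm_num)]
        linarith
      calc ‖z‖ ^ (n + 2) * (C / R ^ (n + 2)) = K * (‖z‖ / R) ^ n := by
            rw [hK, div_pow]
            field_simp
            ring
        _ ≤ K * (1 / 2) ^ n := by
            apply mul_le_mul_of_nonneg_left _ (by positivity)
            exact pow_le_pow_left₀ (by positivity) hzR' n
    have hgeom : HasSum (fun n : ℕ => K * (1 / 2) ^ n) (K * 2) := by
      have := (hasSum_geometric_of_lt_one (r := (1:ℝ)/2) (by norm_num) (by norm_num)).mul_left K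
      rw [show ((1:ℝ) - 1 / 2)⁻¹ = 2 by norm_num] at this
      exact this
    calc ‖φ z - φ 0 - deriv φ 0 * z‖ = ‖∑' n, z ^ (n + 2) * p.coeff (n + 2)‖ := by
          rw [h2.tsum_eq]
      _ ≤ K * 2 := tsum_of_norm_bounded hgeom hbnd
      _ = 2 * C / R ^ 2 * ‖z‖ ^ 2 := by rw [hK]; ring

end Taylor

section PhiDiff

variable {ι : Type} (U : Ultrafilter ι) (gA : ι → ℓ2 → ℓ2)

/-- the one-dimensional slice is differentiable and bounded. -/
lemma slice_setup (hgA : ∀ i, gA i ∈ ballHV) {u : ℓ2 → ℂ} (hu : MemAu u)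
    {C : ℝ} (hC : ∀ x ∈ oB, ‖u x‖ ≤ C)
    (i : ι) {x₀ v : ℓ2} {r : ℝ} (hr : 0 < r)
    (hsub : ∀ w : ℓ2, ‖w‖ ≤ r → x₀ + w ∈ oB) (hv : v ≠ 0) :
    DifferentiableOn ℂ (fun z : ℂ => u (gA i (x₀ + z • v))) (Metric.closedBall 0 (r / ‖v‖))
    ∧ ∀ z ∈ Metric.closedBall (0:ℂ) (r / ‖v‖), ‖u (gA i (x₀ + z • v))‖ ≤ C := by
  have hv0 : 0 < ‖v‖ := norm_pos_iff.2 hv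
  have hmaps : ∀ z ∈ Metric.closedBall (0:ℂ) (r / ‖v‖), x₀ + z • v ∈ oB := by
    intro z hz
    apply hsub
    rw [norm_smul]
    rw [mem_closedBall_zero_iff] at hz
    calc ‖z‖ * ‖v‖ ≤ (r / ‖v‖) * ‖v‖ := mul_le_mul_of_nonneg_right hz hv0.le
      _ = r := div_mul_cancel₀ r (ne_of_gt hv0)
  have hgd : DifferentiableOn ℂ (gA i) oB := (hgA i).1.1
  have hgm : ∀ x ∈ oB, gA i x ∈ oB := fun x hx => ballHV_mapsTo (hgA i) hx
  have hline : Differentiable ℂ (fun z : ℂ => x₀ + z • v) := by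
    apply Differentiable.const_add
    exact (differentiable_id.smul_const v)
  have hFd : DifferentiableOn ℂ (fun x => u (gA i x)) oB :=
    hu.1.comp hgd (fun x hx => hgm x hx)
  constructor
  · exact hFd.comp hline.differentiableOn hmaps
  · intro z hz
    exact hC _ (hgm _ (hmaps z hz))

/-- pointwise ultrafilter limits of the composition net are holomorphic. -/
lemma phi_diff (hgA : ∀ i, gA i ∈ ballHV) {u : ℓ2 → ℂ} (hu : MemAu u) :
    DifferentiableOn ℂ (fun x => limUnder ↑U (fun i => u (gA i x))) oB := by
  obtain ⟨C, hC0, hC⟩ := hu.bounded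
  set F : ι → ℓ2 → ℂ := fun i x => u (gA i x) with hF
  have hFb : ∀ i, ∀ x ∈ oB, ‖F i x‖ ≤ C := fun i x hx =>
    hC _ (ballHV_mapsTo (hgA i) hx)
  have key : ∀ x ∈ oB, Tendsto (fun i => F i x) ↑U
      (nhds (limUnder ↑U (fun i => F i x))) :=
    fun x hx => ultra_lim U _ C (fun i => hFb i x hx)
  intro x₀ hx₀
  have hx₀1 : ‖x₀‖ < 1 := mem_oB_iff.1 hx₀
  set r : ℝ := (1 - ‖x₀‖) / 2 with hr
  have hr0 : 0 < r := by rw [hr]; linarith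
  have hsub : ∀ w : ℓ2, ‖w‖ ≤ r → x₀ + w ∈ oB := by
    intro w hw
    rw [mem_oB_iff]
    calc ‖x₀ + w‖ ≤ ‖x₀‖ + ‖w‖ := norm_add_le _ _
      _ ≤ ‖x₀‖ + r := by linarith
      _ < 1 := by rw [hr]; linarith
  -- derivative along direction and Taylor estimates, for each i
  have hder : ∀ (i : ι) (v : ℓ2), HasDerivAt (fun z : ℂ => F i (x₀ + z • v))
      (fderiv ℂ (F i) x₀ v) 0 := by
    intro i v
    have hFd : DifferentiableOn ℂ (F i) oB :=
      hu.1.comp (hgA i).1.1 (fun x hx => ballHV_mapsTo (hgA i) hx)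
    have hFi : DifferentiableAt ℂ (F i) x₀ :=
      hFd.differentiableAt (oB_open.mem_nhds hx₀)
    have hline : HasDerivAt (fun z : ℂ => x₀ + z • v) v 0 := by
      simpa using ((hasDerivAt_id (0:ℂ)).smul_const v).const_add x₀
    have hl : HasFDerivAt (F i) (fderiv ℂ (F i) x₀) ((fun z : ℂ => x₀ + z • v) 0) := by
      simpa using hFi.hasFDerivAt
    exact HasFDerivAt.comp_hasDerivAt (l := F i) (f := fun z : ℂ => x₀ + z • v) 0 hl hline
  have hdval : ∀ (i : ι) (v : ℓ2), v ≠ 0 →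
      deriv (fun z : ℂ => F i (x₀ + z • v)) 0 = fderiv ℂ (F i) x₀ v :=
    fun i v _ => (hder i v).deriv
  have hdb : ∀ (i : ι) (v : ℓ2), ‖fderiv ℂ (F i) x₀ v‖ ≤ C / r * ‖v‖ := by
    intro i v
    rcases eq_or_ne v 0 with rfl | hv
    · simp
    · have hv0 : 0 < ‖v‖ := norm_pos_iff.2 hv
      have hRv : 0 < r / ‖v‖ := by positivity
      obtain ⟨hsd, hsb⟩ := slice_setup gA hgA hu hC i hr0 hsub hv
      have := (taylor_bound hRv hsd hsb).1
      rw [hdval i v hv] at this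
      calc ‖fderiv ℂ (F i) x₀ v‖ ≤ C / (r / ‖v‖) := this
        _ = C / r * ‖v‖ := by field_simp
  have hquad : ∀ (i : ι) (v : ℓ2), v ≠ 0 → ‖v‖ ≤ r / 2 →
      ‖F i (x₀ + v) - F i x₀ - fderiv ℂ (F i) x₀ v‖ ≤ 2 * C / r ^ 2 * ‖v‖ ^ 2 := by
    intro i v hv hv2
    have hv0 : 0 < ‖v‖ := norm_pos_iff.2 hv
    have hRv : 0 < r / ‖v‖ := by positivity
    obtain ⟨hsd, hsb⟩ := slice_setup gA hgA hu hC i hr0 hsub hv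
    have h1 : ‖(1:ℂ)‖ ≤ (r / ‖v‖) / 2 := by
      rw [norm_one, le_div_iff₀ (by norm_num), one_mul, le_div_iff₀ hv0]
      linarith
    have := (taylor_bound hRv hsd hsb).2 1 h1
    rw [hdval i v hv, mul_one, norm_one] at this
    rw [one_smul, zero_smul, add_zero] at this
    calc ‖F i (x₀ + v) - F i x₀ - fderiv ℂ (F i) x₀ v‖
        ≤ 2 * C / (r / ‖v‖) ^ 2 * 1 ^ 2 := this
      _ = 2 * C / r ^ 2 * ‖v‖ ^ 2 := by
          rw [div_pow]
          field_simp
  -- the limit linear functional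
  have keyL : ∀ v : ℓ2, Tendsto (fun i => fderiv ℂ (F i) x₀ v) ↑U
      (nhds (limUnder ↑U (fun i => fderiv ℂ (F i) x₀ v))) :=
    fun v => ultra_lim U _ (C / r * ‖v‖) (fun i => hdb i v)
  set Lf : ℓ2 → ℂ := fun v => limUnder ↑U (fun i => fderiv ℂ (F i) x₀ v) with hLf
  have Ladd : ∀ v w, Lf (v + w) = Lf v + Lf w := by
    intro v w
    have h1 : Tendsto (fun i => fderiv ℂ (F i) x₀ (v + w)) ↑U (nhds (Lf v + Lf w)) := by
      simpa only [map_add] using (keyL v).add (keyL w)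
    exact h1.limUnder_eq
  have Lsmul : ∀ (c : ℂ) (v), Lf (c • v) = c • Lf v := by
    intro c v
    have h1 : Tendsto (fun i => fderiv ℂ (F i) x₀ (c • v)) ↑U (nhds (c • Lf v)) := by
      simpa only [map_smul] using (keyL v).const_smul c
    exact h1.limUnder_eq
  have Lbound : ∀ v, ‖Lf v‖ ≤ C / r * ‖v‖ := fun v =>
    le_of_tendsto (keyL v).norm (Filter.Eventually.of_forall (fun i => hdb i v))
  set L : ℓ2 →L[ℂ] ℂ := LinearMap.mkContinuous
    { toFun := Lf, map_add' := Ladd, map_smul' := Lsmul } (C / r) Lbound with hL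
  -- conclude via the little-o characterization
  have hmain : HasFDerivAt (fun x => limUnder ↑U (fun i => F i x)) L x₀ := by
    rw [hasFDerivAt_iff_isLittleO_nhds_zero, Asymptotics.isLittleO_iff]
    intro c hc
    have hε : 0 < min (r / 2) (c * r ^ 2 / (2 * C + 1)) := by positivity
    filter_upwards [Metric.ball_mem_nhds (0 : ℓ2) hε] with v hv
    rw [Metric.mem_ball, dist_zero_right] at hv
    rcases eq_or_ne v 0 with rfl | hvne
    · simp
    · have hv2 : ‖v‖ ≤ r / 2 := le_of_lt (lt_of_lt_of_le hv (min_le_left _ _))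
      have hv3 : ‖v‖ ≤ c * r ^ 2 / (2 * C + 1) :=
        le_of_lt (lt_of_lt_of_le hv (min_le_right _ _))
      have hmem : x₀ + v ∈ oB := hsub v (by linarith)
      have hLv : L v = Lf v := rfl
      have T : Tendsto (fun i => F i (x₀ + v) - F i x₀ - fderiv ℂ (F i) x₀ v) ↑U
          (nhds (limUnder ↑U (fun i => F i (x₀ + v)) - limUnder ↑U (fun i => F i x₀)
            - Lf v)) := ((key _ hmem).sub (key _ hx₀)).sub (keyL v)
      have hbd : ‖limUnder ↑U (fun i => F i (x₀ + v)) - limUnder ↑U (fun i => F i x₀)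
          - Lf v‖ ≤ 2 * C / r ^ 2 * ‖v‖ ^ 2 :=
        le_of_tendsto T.norm (Filter.Eventually.of_forall (fun i => hquad i v hvne hv2))
      have hfinal : 2 * C / r ^ 2 * ‖v‖ ^ 2 ≤ c * ‖v‖ := by
        have hv0 : 0 < ‖v‖ := norm_pos_iff.2 hvne
        rw [pow_two ‖v‖, ← mul_assoc]
        apply mul_le_mul_of_nonneg_right _ hv0.le
        rw [div_mul_eq_mul_div, div_le_iff₀ (by positivity)]
        have h1 : 2 * C * ‖v‖ ≤ 2 * C * (c * r ^ 2 / (2 * C + 1)) :=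
          mul_le_mul_of_nonneg_left hv3 (by positivity)
        have h2 : 2 * C * (c * r ^ 2 / (2 * C + 1)) = c * r ^ 2 * (2 * C / (2 * C + 1)) := by
          ring
        have h3 : 2 * C / (2 * C + 1) ≤ 1 := by
          rw [div_le_one (by positivity)]; linarith
        have h4 : c * r ^ 2 * (2 * C / (2 * C + 1)) ≤ c * r ^ 2 * 1 :=
          mul_le_mul_of_nonneg_left h3 (by positivity)
        calc 2 * C * ‖v‖ ≤ c * r ^ 2 * (2 * C / (2 * C + 1)) := by rw [← h2]; exact h1
          _ ≤ c * r ^ 2 := by linarith [h4]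
      calc ‖limUnder ↑U (fun i => F i (x₀ + v)) - limUnder ↑U (fun i => F i x₀) - L v‖
          = ‖limUnder ↑U (fun i => F i (x₀ + v)) - limUnder ↑U (fun i => F i x₀) - Lf v‖ := by
            rw [hLv]
        _ ≤ 2 * C / r ^ 2 * ‖v‖ ^ 2 := hbd
        _ ≤ c * ‖v‖ := hfinal
  exact hmain.differentiableAt.differentiableWithinAt

end PhiDiff

/-- the cluster set `𝒞ℓ(f,g)` is contained in `f̂(𝓕(g))`: every `h ∈ 𝒞ℓ(f,g)`
is of the form `Φ(f)` for some `Φ` in the fiber over `g`. -/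
theorem stmt12 (g : ℓ2 → ℓ2) (hg : MemHinfV g) (hg1 : supNormV g ≤ 1)
    (f fext : ℓ2 → ℂ) (hf : MemAu f) (hext : IsExt f fext) :
    ∀ h, MemHinf h → InCluster fext g h →
      ∃ Φ : MuInfHom, xiEq Φ g ∧ ∀ x ∈ oB, Φ.toFun f x = h x := by
  intro h hh hclu
  obtain ⟨ι, l, hl, gA, hgA, hweak, hcl⟩ := hclu
  haveI := hl
  set U : Ultrafilter ι := Ultrafilter.of l with hU
  have hUl : ↑U ≤ l := Ultrafilter.of_le l
  have key : ∀ (u : ℓ2 → ℂ), MemAu u → ∀ x ∈ oB,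
      Tendsto (fun i => u (gA i x)) ↑U (nhds (limUnder ↑U (fun i => u (gA i x)))) := by
    intro u hu x hx
    obtain ⟨C, hC0, hC⟩ := hu.bounded
    exact ultra_lim U _ C (fun i => hC _ (ballHV_mapsTo (hgA i) hx))
  refine ⟨{
    toFun := fun u x => limUnder ↑U (fun i => u (gA i x))
    maps_mem := ?_
    map_add := ?_
    map_mul := ?_
    map_smul := ?_
    respects := ?_
    nonzero := ?_
    cont := ?_ }, ?_, ?_⟩
  · -- maps_mem
    intro u hu
    refine ⟨phi_diff U gA hgA hu, ?_⟩
    obtain ⟨C, hC0, hC⟩ := hu.bounded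
    exact ⟨C, fun x hx => le_of_tendsto (key u hu x hx).norm
      (Filter.Eventually.of_forall fun i => hC _ (ballHV_mapsTo (hgA i) hx))⟩
  · -- map_add
    intro u v hu hv x hx
    have h1 := (key u hu x hx).add (key v hv x hx)
    simp only [Pi.add_apply]
    exact h1.limUnder_eq
  · -- map_mul
    intro u v hu hv x hx
    have h1 := (key u hu x hx).mul (key v hv x hx)
    simp only [Pi.mul_apply]
    exact h1.limUnder_eq
  · -- map_smul
    intro c u hu x hx
    have h1 := (key u hu x hx).const_mul c
    simp only [Pi.smul_apply, smul_eq_mul]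
    exact h1.limUnder_eq
  · -- respects
    intro u v hu hv heq x hx
    have h1 : (fun i => u (gA i x)) = fun i => v (gA i x) :=
      funext fun i => heq (ballHV_mapsTo (hgA i) hx)
    show limUnder ↑U (fun i => u (gA i x)) = limUnder ↑U (fun i => v (gA i x))
    rw [h1]
  · -- nonzero
    have hmem1 : MemAu (fun _ : ℓ2 => (1:ℂ)) := by
      refine ⟨differentiableOn_const 1, ?_⟩
      refine Metric.uniformContinuousOn_iff.2 fun ε hε => ⟨1, one_pos, ?_⟩
      intro x _ y _ _
      simpa using hε
    refine ⟨fun _ => 1, hmem1, 0, zero_mem_oB, ?_⟩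
    have h1 : Tendsto (fun _ : ι => (1:ℂ)) ↑U (nhds 1) := tendsto_const_nhds
    show limUnder ↑U (fun _ : ι => (1:ℂ)) ≠ 0
    rw [h1.limUnder_eq]
    exact one_ne_zero
  · -- cont
    refine ⟨1, fun u hu x hx => ?_⟩
    obtain ⟨C, hC0, hC⟩ := hu.bounded
    rw [one_mul]
    exact le_of_tendsto (key u hu x hx).norm
      (Filter.Eventually.of_forall fun i =>
        norm_le_supNorm hC (ballHV_mapsTo (hgA i) hx))
  · -- xiEq
    intro x hx n
    have h1 := hweak x hx (lp.single 2 n 1)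
    have h2 : ∀ (y : ℓ2), (inner ℂ y (lp.single 2 n 1) : ℂ) = (starRingEnd ℂ) (y n) := by
      intro y
      rw [lp.inner_single_right]
      simp [RCLike.inner_apply]
    simp only [h2] at h1
    have h3 : Tendsto (fun i => (gA i x) n) l (nhds (g x n)) := by
      have := (Complex.continuous_conj.tendsto ((starRingEnd ℂ) (g x n))).comp h1
      simpa [Function.comp_def, Complex.conj_conj] using this
    exact ((h3.mono_left hUl).limUnder_eq : limUnder ↑U (fun i => (gA i x) n) = g x n)
  · -- Φ f = h
    intro x hx
    have h1 := (hcl x hx).mono_left hUl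
    have h2 : (fun i => fext (gA i x)) = fun i => f (gA i x) :=
      funext fun i => hext.2 (ballHV_mapsTo (hgA i) hx)
    rw [h2] at h1
    exact h1.limUnder_eq
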